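/- Let m be an odd positive integer. For every C ∈ R, the number of triples (X,Y,Z) ∈ 𝒯 × 𝒯 × 𝒯 with X + Y − Z = C equals 2^{m+1} − 1 if C ∈ 𝒯, and equals 2^m − 1 otherwise. -/

import Mathlib

/-!
Reduction modulo 2 maps the Teichmüller set `𝒯` bijectively onto `𝔽_q`, with inverse
`τ a = ã ^ q` for any lift `ã` of `a`. Since `4 = 0`,
`(u + v) ^ q = u ^ q + v ^ q + 2 (u v) ^ (q / 2)`, so `τ a + τ b = τ (a + b) + 2 τ (√(a b))`
and `τ x + τ y - τ z = τ (x + y + z) + 2 τ (√((x + y) z) + √(x y) + z)`.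
Writing `C = τ c + 2 τ d` uniquely, the equation becomes `x + y + z = c`, `(x + z)(y + z) = d²`
over `𝔽_q`; with `u = x + z`, `v = y + z` one counts solutions of `u v = d²`: `2q - 1` when
`d = 0`, i.e. `C ∈ 𝒯`, and `q - 1` otherwise.
-/

open Polynomial
open scoped Classical

section CharFour

variable {R : Type*} [CommRing R]

theorem add_pow_two_pow_succ_of_four_eq_zero (h4 : (4 : R) = 0) (k : ℕ) (u v : R) :
    (u + v) ^ 2 ^ (k + 1) = u ^ 2 ^ (k + 1) + v ^ 2 ^ (k + 1) + 2 * (u * v) ^ 2 ^ k := by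
  induction k with
  | zero => ring
  | succ k ih =>
    have hsq : ∀ w : R, w ^ 2 ^ (k + 2) = (w ^ 2 ^ (k + 1)) ^ 2 := fun w => by
      rw [← pow_mul, ← pow_succ]
    rw [hsq, hsq, hsq, ih]
    linear_combination 2 * (mul_pow u v (2 ^ (k + 1))).symm +
      ((u * v) ^ 2 ^ k * (u ^ 2 ^ (k + 1) + v ^ 2 ^ (k + 1) + (u * v) ^ 2 ^ k)) * h4

theorem pow_two_pow_eq_of_two_dvd_sub (h4 : (4 : R) = 0) {m : ℕ} (hm : m ≠ 0) {w w' : R}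
    (h : 2 ∣ w - w') : w ^ 2 ^ m = w' ^ 2 ^ m := by
  obtain ⟨s, hs⟩ := h
  have hsq : w ^ 2 = w' ^ 2 := by
    rw [show w = w' + 2 * s by linear_combination hs]
    linear_combination (w' * s + s ^ 2) * h4
  obtain ⟨k, rfl⟩ := Nat.exists_eq_succ_of_ne_zero hm
  rw [pow_succ', pow_mul, pow_mul, hsq]

end CharFour

theorem card_add_eq_and_mul_eq {K : Type*} [CommRing K] (c e : K) :
    Nat.card {p : K × K × K // p.1 + p.2.1 + p.2.2 = c ∧ (p.1 + p.2.2) * (p.2.1 + p.2.2) = e} =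
      Nat.card {q : K × K // q.1 * q.2 = e} :=
  Nat.card_congr
    { toFun := fun p => ⟨(p.1.1 + p.1.2.2, p.1.2.1 + p.1.2.2), p.2.2⟩
      invFun := fun q =>
        ⟨(c - q.1.2, c - q.1.1, q.1.1 + q.1.2 - c), by ring, by simpa using q.2⟩
      left_inv := fun ⟨⟨x, y, z⟩, hc, _⟩ => by
        subst hc
        ext <;> simp only <;> ring
      right_inv := fun ⟨⟨u, v⟩, _⟩ => by ext <;> simp only <;> ring }

theorem card_mul_eq_zero {K : Type*} [CommRing K] [NoZeroDivisors K] [Fintype K] :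
    Nat.card {q : K × K // q.1 * q.2 = 0} = 2 * Nat.card K - 1 := by
  let A : Finset (K × K) := {0} ×ˢ Finset.univ
  let B : Finset (K × K) := Finset.univ ×ˢ {0}
  have hunion : Finset.univ.filter (fun q : K × K => q.1 * q.2 = 0) = A ∪ B := by
    ext ⟨u, v⟩; simp [A, B, eq_comm]
  have hinter : A ∩ B = {(0, 0)} := by
    ext ⟨u, v⟩; simp [A, B, eq_comm, and_comm]
  have h := Finset.card_union_add_card_inter A B
  rw [hinter, Finset.card_singleton] at h
  have hA : A.card = Fintype.card K := by simp [A]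
  have hB : B.card = Fintype.card K := by simp [B]
  rw [Nat.card_eq_fintype_card, Fintype.card_subtype, hunion, Nat.card_eq_fintype_card]
  omega

theorem card_mul_eq_of_ne_zero {K : Type*} [Field K] {e : K} (he : e ≠ 0) :
    Nat.card {q : K × K // q.1 * q.2 = e} = Nat.card K - 1 := by
  rw [← Nat.card_units]
  refine Nat.card_congr
    { toFun := fun q => Units.mk0 q.1.1 (left_ne_zero_of_mul (q.2 ▸ he))
      invFun := fun u => ⟨(u, u⁻¹ * e), by simp⟩
      left_inv := fun ⟨⟨u, v⟩, huv⟩ => by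
        ext
        · rfl
        · simp [← huv, left_ne_zero_of_mul (huv ▸ he)]
      right_inv := fun u => by ext; rfl }

section GaloisRing

variable {R K : Type*} [CommRing R] [Field K]

/-- `φ` is the reduction `R → R / 2R ≅ 𝔽_{2^m}` of a ring of characteristic `4` such as
`GR(4, m)`. -/
structure IsGR4Reduction (φ : R →+* K) (m : ℕ) : Prop where
  surjective : Function.Surjective φ
  ker_eq : RingHom.ker φ = Ideal.span {2}
  four_eq_zero : (4 : R) = 0
  two_ne_zero : (2 : R) ≠ 0
  card_eq : Nat.card K = 2 ^ m

noncomputable def teichmullerLift (φ : R →+* K) (m : ℕ) (a : K) : R :=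
  Function.invFun φ a ^ 2 ^ m

namespace IsGR4Reduction

variable {φ : R →+* K} {m : ℕ}

theorem map_eq_zero_iff (hR : IsGR4Reduction φ m) {w : R} : φ w = 0 ↔ 2 ∣ w := by
  rw [← RingHom.mem_ker, hR.ker_eq, Ideal.mem_span_singleton]

theorem exponent_ne_zero (hR : IsGR4Reduction φ m) : m ≠ 0 := by
  rintro rfl
  have : Subsingleton K := (Nat.card_eq_one_iff_unique.mp hR.card_eq).1
  exact zero_ne_one (Subsingleton.elim (0 : K) 1)

theorem pow_two_pow (hR : IsGR4Reduction φ m) (a : K) : a ^ 2 ^ m = a := by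
  have : Finite K := Nat.finite_of_card_ne_zero (by simp [hR.card_eq])
  have := Fintype.ofFinite K
  rw [← hR.card_eq, Nat.card_eq_fintype_card, FiniteField.pow_card]

theorem two_eq_zero (hR : IsGR4Reduction φ m) : (2 : K) = 0 := by
  simpa only [map_ofNat] using hR.map_eq_zero_iff.2 (dvd_refl (2 : R))

theorem isUnit_of_map_ne_zero (hR : IsGR4Reduction φ m) {w : R} (hw : φ w ≠ 0) : IsUnit w := by
  obtain ⟨v, hv⟩ := hR.surjective (φ w)⁻¹
  obtain ⟨s, hs⟩ := hR.map_eq_zero_iff.1 (show φ (w * v - 1) = 0 by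
    rw [map_sub, map_mul, hv, mul_inv_cancel₀ hw, map_one, sub_self])
  -- `1 + 2 * s` is a unit with inverse `1 - 2 * s`
  have hu : w * (v * (1 - 2 * s)) = 1 := by
    linear_combination (1 - 2 * s) * hs - s ^ 2 * hR.four_eq_zero
  exact IsUnit.of_mul_eq_one _ hu

theorem two_mul_eq_zero_iff (hR : IsGR4Reduction φ m) {w : R} : 2 * w = 0 ↔ φ w = 0 := by
  refine ⟨fun h => ?_, fun h => ?_⟩
  · by_contra hw
    obtain ⟨u, rfl⟩ := hR.isUnit_of_map_ne_zero hw
    exact hR.two_ne_zero ((Units.mul_left_eq_zero u).mp h)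
  · obtain ⟨s, rfl⟩ := hR.map_eq_zero_iff.1 h
    linear_combination s * hR.four_eq_zero

local notation "τ" => teichmullerLift φ m

theorem pow_two_pow_eq_teichmullerLift (hR : IsGR4Reduction φ m) (w : R) :
    w ^ 2 ^ m = τ (φ w) :=
  pow_two_pow_eq_of_two_dvd_sub hR.four_eq_zero hR.exponent_ne_zero <| hR.map_eq_zero_iff.1 <| by
    rw [map_sub, Function.invFun_eq (f := φ) ⟨w, rfl⟩, sub_self]

theorem map_teichmullerLift (hR : IsGR4Reduction φ m) (a : K) : φ (τ a) = a := by
  rw [teichmullerLift, map_pow, Function.invFun_eq (hR.surjective a), hR.pow_two_pow]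

theorem teichmullerLift_pow_two_pow (hR : IsGR4Reduction φ m) (a : K) : τ a ^ 2 ^ m = τ a := by
  rw [hR.pow_two_pow_eq_teichmullerLift, hR.map_teichmullerLift]

theorem teichmullerLift_map (hR : IsGR4Reduction φ m) {z : R} (hz : z ^ 2 ^ m = z) :
    τ (φ z) = z := by
  rw [← hR.pow_two_pow_eq_teichmullerLift, hz]

theorem teichmullerLift_zero (hR : IsGR4Reduction φ m) : τ 0 = 0 := by
  simpa using (hR.pow_two_pow_eq_teichmullerLift 0).symm

theorem teichmullerLift_mul (hR : IsGR4Reduction φ m) (a b : K) : τ a * τ b = τ (a * b) := by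
  rw [teichmullerLift, teichmullerLift, ← mul_pow, hR.pow_two_pow_eq_teichmullerLift, map_mul,
    Function.invFun_eq (hR.surjective a), Function.invFun_eq (hR.surjective b)]

theorem teichmullerLift_pow (hR : IsGR4Reduction φ m) (a : K) (n : ℕ) :
    τ a ^ n = τ (a ^ n) := by
  rw [teichmullerLift, ← pow_mul, mul_comm, pow_mul, hR.pow_two_pow_eq_teichmullerLift, map_pow,
    Function.invFun_eq (hR.surjective a)]

theorem teichmullerLift_add (hR : IsGR4Reduction φ m) (a b : K) :
    τ a + τ b = τ (a + b) + 2 * τ ((a * b) ^ 2 ^ (m - 1)) := by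
  have h := add_pow_two_pow_succ_of_four_eq_zero hR.four_eq_zero (m - 1) (τ a) (τ b)
  rw [Nat.sub_add_cancel (Nat.one_le_iff_ne_zero.2 hR.exponent_ne_zero),
    hR.pow_two_pow_eq_teichmullerLift, map_add, hR.map_teichmullerLift, hR.map_teichmullerLift,
    hR.teichmullerLift_pow_two_pow, hR.teichmullerLift_pow_two_pow, hR.teichmullerLift_mul,
    hR.teichmullerLift_pow] at h
  linear_combination -h - τ ((a * b) ^ 2 ^ (m - 1)) * hR.four_eq_zero

theorem two_mul_teichmullerLift_add (hR : IsGR4Reduction φ m) (a b : K) :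
    2 * τ a + 2 * τ b = 2 * τ (a + b) := by
  linear_combination 2 * hR.teichmullerLift_add a b +
    τ ((a * b) ^ 2 ^ (m - 1)) * hR.four_eq_zero

theorem teichmullerLift_add_sub (hR : IsGR4Reduction φ m) (x y z : K) :
    τ x + τ y - τ z =
      τ (x + y + z) + 2 * τ (((x + y) * z) ^ 2 ^ (m - 1) + (x * y) ^ 2 ^ (m - 1) + z) := by
  linear_combination hR.teichmullerLift_add x y + hR.teichmullerLift_add (x + y) z +
    hR.two_mul_teichmullerLift_add (((x + y) * z) ^ 2 ^ (m - 1)) ((x * y) ^ 2 ^ (m - 1)) +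
    hR.two_mul_teichmullerLift_add (((x + y) * z) ^ 2 ^ (m - 1) + (x * y) ^ 2 ^ (m - 1)) z -
    τ z * hR.four_eq_zero

theorem exists_eq_teichmullerLift_add_two_mul (hR : IsGR4Reduction φ m) (w : R) :
    ∃ c d, w = τ c + 2 * τ d := by
  obtain ⟨s, hs⟩ := hR.map_eq_zero_iff.1 (show φ (w - τ (φ w)) = 0 by
    rw [map_sub, hR.map_teichmullerLift, sub_self])
  have hs' : 2 * (s - τ (φ s)) = 0 := hR.two_mul_eq_zero_iff.2 (by
    rw [map_sub, hR.map_teichmullerLift, sub_self])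
  exact ⟨φ w, φ s, by linear_combination hs + hs'⟩

theorem teichmullerLift_add_two_mul_inj (hR : IsGR4Reduction φ m) {a b a' b' : K}
    (h : τ a + 2 * τ b = τ a' + 2 * τ b') : a = a' ∧ b = b' := by
  have ha : a = a' := by
    simpa [hR.map_teichmullerLift, map_ofNat, hR.two_eq_zero] using congrArg φ h
  subst ha
  have hb : 2 * (τ b - τ b') = 0 := by linear_combination h
  rw [hR.two_mul_eq_zero_iff, map_sub, hR.map_teichmullerLift, hR.map_teichmullerLift,
    sub_eq_zero] at hb
  exact ⟨rfl, hb⟩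

theorem pow_two_pow_eq_self_iff (hR : IsGR4Reduction φ m) {w : R} {c d : K}
    (hw : w = τ c + 2 * τ d) : w ^ 2 ^ m = w ↔ d = 0 := by
  have hc : φ w = c := by simp [hw, hR.map_teichmullerLift, map_ofNat, hR.two_eq_zero]
  rw [hR.pow_two_pow_eq_teichmullerLift, hc, hw]
  constructor
  · intro h
    refine (hR.teichmullerLift_add_two_mul_inj (a := c) (b := 0) (a' := c) ?_).2.symm
    rw [hR.teichmullerLift_zero]
    linear_combination h
  · rintro rfl
    rw [hR.teichmullerLift_zero, mul_zero, add_zero]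

theorem pow_two_pow_pred_sq (hR : IsGR4Reduction φ m) (a : K) : (a ^ 2 ^ (m - 1)) ^ 2 = a := by
  rw [← pow_mul, ← pow_succ, Nat.sub_add_cancel (Nat.one_le_iff_ne_zero.2 hR.exponent_ne_zero),
    hR.pow_two_pow]

theorem sq_injective (hR : IsGR4Reduction φ m) : Function.Injective fun a : K => a ^ 2 := by
  intro a b h
  rw [← hR.pow_two_pow_pred_sq a, ← hR.pow_two_pow_pred_sq b, pow_right_comm, pow_right_comm b]
  exact congrArg (· ^ 2 ^ (m - 1)) h

theorem teichmullerLift_add_sub_eq_iff (hR : IsGR4Reduction φ m) {w : R} {c d : K}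
    (hw : w = τ c + 2 * τ d) (x y z : K) :
    τ x + τ y - τ z = w ↔ x + y + z = c ∧ (x + z) * (y + z) = d ^ 2 := by
  rw [hR.teichmullerLift_add_sub, hw]
  set e := ((x + y) * z) ^ 2 ^ (m - 1) + (x * y) ^ 2 ^ (m - 1) + z
  -- `e` is the square root of `(x + z) * (y + z)` in characteristic two
  have he : e ^ 2 = (x + z) * (y + z) := by
    linear_combination hR.pow_two_pow_pred_sq ((x + y) * z) + hR.pow_two_pow_pred_sq (x * y) +
      (((x + y) * z) ^ 2 ^ (m - 1) * (x * y) ^ 2 ^ (m - 1) + ((x + y) * z) ^ 2 ^ (m - 1) * z +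
        (x * y) ^ 2 ^ (m - 1) * z) * hR.two_eq_zero
  rw [← he]
  refine ⟨fun h => ?_, fun ⟨h1, h2⟩ => by rw [h1, hR.sq_injective h2]⟩
  obtain ⟨h1, h2⟩ := hR.teichmullerLift_add_two_mul_inj h
  exact ⟨h1, by rw [h2]⟩

theorem card_teichmuller_triples_eq (hR : IsGR4Reduction φ m) (P : R × R × R → Prop) :
    Nat.card {t : R × R × R //
        t.1 ^ 2 ^ m = t.1 ∧ t.2.1 ^ 2 ^ m = t.2.1 ∧ t.2.2 ^ 2 ^ m = t.2.2 ∧ P t} =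
      Nat.card {p : K × K × K // P (τ p.1, τ p.2.1, τ p.2.2)} :=
  Nat.card_congr
    { toFun := fun t => ⟨(φ t.1.1, φ t.1.2.1, φ t.1.2.2), by
        obtain ⟨⟨x, y, z⟩, hx, hy, hz, h⟩ := t
        simpa only [hR.teichmullerLift_map hx, hR.teichmullerLift_map hy,
          hR.teichmullerLift_map hz] using h⟩
      invFun := fun p => ⟨(τ p.1.1, τ p.1.2.1, τ p.1.2.2), hR.teichmullerLift_pow_two_pow _,
        hR.teichmullerLift_pow_two_pow _, hR.teichmullerLift_pow_two_pow _, p.2⟩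
      left_inv := fun ⟨⟨x, y, z⟩, hx, hy, hz, _⟩ => by
        simp only [hR.teichmullerLift_map hx, hR.teichmullerLift_map hy,
          hR.teichmullerLift_map hz]
      right_inv := fun ⟨⟨x, y, z⟩, _⟩ => by simp only [hR.map_teichmullerLift] }

theorem card_teichmuller_add_sub_eq (hR : IsGR4Reduction φ m) (w : R) :
    Nat.card {t : R × R × R //
        t.1 ^ 2 ^ m = t.1 ∧ t.2.1 ^ 2 ^ m = t.2.1 ∧ t.2.2 ^ 2 ^ m = t.2.2 ∧
        t.1 + t.2.1 - t.2.2 = w} =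
      if w ^ 2 ^ m = w then 2 ^ (m + 1) - 1 else 2 ^ m - 1 := by
  obtain ⟨c, d, hw⟩ := hR.exists_eq_teichmullerLift_add_two_mul w
  have : Finite K := Nat.finite_of_card_ne_zero (by simp [hR.card_eq])
  have := Fintype.ofFinite K
  rw [hR.card_teichmuller_triples_eq,
    Nat.card_congr (Equiv.subtypeEquivRight fun p => hR.teichmullerLift_add_sub_eq_iff hw _ _ _),
    card_add_eq_and_mul_eq, hR.pow_two_pow_eq_self_iff hw]
  split_ifs with hd
  · rw [hd, zero_pow _root_.two_ne_zero, card_mul_eq_zero, hR.card_eq, pow_succ']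
  · rw [card_mul_eq_of_ne_zero (pow_ne_zero 2 hd), hR.card_eq]

end IsGR4Reduction

end GaloisRing

namespace AdjoinRoot

variable {R S : Type*} [CommRing R] [CommRing S]

theorem map_mk (f : R →+* S) (p : R[X]) (q : S[X]) (h : q ∣ p.map f) (g : R[X]) :
    map f p q h (mk p g) = mk q (g.map f) := by
  simp [map, lift_mk, ← eval₂_map, ← algebraMap_eq, ← aeval_def]

theorem map_surjective {f : R →+* S} (hf : Function.Surjective f) (p : R[X]) (q : S[X])
    (h : q ∣ p.map f) : Function.Surjective (map f p q h) := by
  intro z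
  obtain ⟨g, rfl⟩ := mk_surjective z
  obtain ⟨g', rfl⟩ := Polynomial.map_surjective f hf g
  exact ⟨mk p g', map_mk f p q h g'⟩

theorem ker_map {f : R →+* S} (hf : Function.Surjective f) (p : R[X]) :
    RingHom.ker (map f p (p.map f) dvd_rfl) = (RingHom.ker f).map (of p) := by
  apply le_antisymm
  · intro w hw
    obtain ⟨g, rfl⟩ := mk_surjective w
    rw [RingHom.mem_ker, map_mk, mk_eq_zero] at hw
    obtain ⟨r, hr⟩ := hw
    obtain ⟨r', rfl⟩ := Polynomial.map_surjective f hf r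
    have hker : g - p * r' ∈ RingHom.ker (mapRingHom f) := by
      simp [RingHom.mem_ker, hr]
    rw [ker_mapRingHom] at hker
    have := Ideal.mem_map_of_mem (mk p) hker
    rwa [Ideal.map_map, map_sub, map_mul, mk_self, zero_mul, sub_zero] at this
  · rw [Ideal.map_le_iff_le_comap]
    intro r hr
    simp_all [RingHom.mem_ker]

end AdjoinRoot

theorem ZMod.ker_castHom_four_two :
    RingHom.ker (ZMod.castHom (show 2 ∣ 4 by norm_num) (ZMod 2)) = Ideal.span {2} := by
  ext x
  rw [RingHom.mem_ker, Ideal.mem_span_singleton]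
  constructor
  · fin_cases x <;> intro h
    exacts [⟨0, rfl⟩, absurd h (by decide), ⟨1, rfl⟩, absurd h (by decide)]
  · rintro ⟨c, rfl⟩
    fin_cases c <;> rfl

theorem AdjoinRoot.isGR4Reduction_map {m : ℕ} {f : (ZMod 4)[X]} (hmonic : f.Monic)
    (hdeg : f.natDegree = m)
    [hirr : Fact (Irreducible (f.map (ZMod.castHom (show 2 ∣ 4 by norm_num) (ZMod 2))))] :
    IsGR4Reduction (map (ZMod.castHom (show 2 ∣ 4 by norm_num) (ZMod 2)) f _ dvd_rfl) m where
  surjective := map_surjective (ZMod.castHom_surjective _) _ _ _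
  ker_eq := by
    rw [ker_map (ZMod.castHom_surjective _), ZMod.ker_castHom_four_two, Ideal.map_span,
      Set.image_singleton, map_ofNat]
  four_eq_zero := by
    rw [← map_ofNat (of f) 4, show (4 : ZMod 4) = 0 from rfl, map_zero]
  two_ne_zero := by
    have hm : 0 < m := by
      simpa [hmonic.natDegree_map, hdeg] using hirr.out.natDegree_pos
    have hlt : degree (C (2 : ZMod 4)) < degree f :=
      degree_C_le.trans_lt (natDegree_pos_iff_degree_pos.1 (hdeg ▸ hm))
    have : Fact (1 < 4) := ⟨by norm_num⟩
    rw [← map_ofNat (mk f) 2, ← C_ofNat, Ne, mk_eq_zero, ← modByMonic_eq_zero_iff_dvd hmonic,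
      (modByMonic_eq_self_iff hmonic).2 hlt]
    exact C_ne_zero.2 (by decide)
  card_eq := by
    let pb := powerBasis hirr.out.ne_zero
    have := pb.finite
    rw [Module.natCard_eq_pow_finrank (K := ZMod 2), Nat.card_zmod, pb.finrank, powerBasis_dim,
      hmonic.natDegree_map, hdeg]

/-- With `R = GR(4,m)` realized as `(ℤ/4ℤ)[x]/(f)` and
`𝒯 = {z : z ^ 2^m = z}` the Teichmüller set (`m` odd), for every `C ∈ R` the number of
triples `(X,Y,Z) ∈ 𝒯³` with `X + Y - Z = C` equals `2^(m+1) - 1` if `C ∈ 𝒯`, and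
`2^m - 1` otherwise. -/
theorem statement5 (m : ℕ)
    (f : Polynomial (ZMod 4)) (hmonic : f.Monic) (hdeg : f.natDegree = m)
    (hirr : Irreducible (f.map (ZMod.castHom (show (2:ℕ) ∣ 4 by norm_num) (ZMod 2))))
    (C : AdjoinRoot f) :
    Nat.card {t : AdjoinRoot f × AdjoinRoot f × AdjoinRoot f //
        t.1 ^ 2 ^ m = t.1 ∧ t.2.1 ^ 2 ^ m = t.2.1 ∧ t.2.2 ^ 2 ^ m = t.2.2 ∧
        t.1 + t.2.1 - t.2.2 = C} =
      if C ^ 2 ^ m = C then 2 ^ (m + 1) - 1 else 2 ^ m - 1 := by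
  have : Fact _ := ⟨hirr⟩
  exact (AdjoinRoot.isGR4Reduction_map hmonic hdeg).card_teichmuller_add_sub_eq C
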